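/- arXiv:0801.0079 — 2 statements merged into one kernel-verified Lean document; each statement's English description precedes it below -/
import Mathlib

section
/- (Theorem 3, stochastic part) Let Ȳ_1,…,Ȳ_k be independent random variables with Ȳ_j distributed as N(μ_j, σ²/n_j). Then for each i, j ∈ [1,k] and every real x, the probability P(μ̂_{i,k}(Ȳ_1,…,Ȳ_k) > x) is a nondecreasing function of μ_j when the other means μ_{j'} (j' ≠ j) and σ > 0 are held fixed; i.e., the distribution of μ̂_{i,k} is stochastically nondecreasing in each μ_j. -/
open Finset

noncomputable section SDMMSA

/-- Pooled weight `n_{i,j} = ∑_{h=i}^j n_h`. -/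
def pooledWeight (n : ℕ → ℝ) (i j : ℕ) : ℝ := ∑ h ∈ Finset.Icc i j, n h

/-- Pooled (weighted) mean `Ȳ_{i,j} = (∑_{h=i}^j n_h Y_h) / n_{i,j}`. -/
def pooledMean (n Y : ℕ → ℝ) (i j : ℕ) : ℝ :=
  (∑ h ∈ Finset.Icc i j, n h * Y h) / pooledWeight n i j

/-- The first SDMMSA index for the data `(Y_1,n_1),…,(Y_t,n_t)`:
the smallest `j ∈ [1,t]` at which `Ȳ_{j,t} = max_{1 ≤ j' ≤ t} Ȳ_{j',t}`. -/
def firstIdx (n Y : ℕ → ℝ) (t : ℕ) : ℕ :=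
  sInf {j | 1 ≤ j ∧ j ≤ t ∧ ∀ j', 1 ≤ j' → j' ≤ t → pooledMean n Y j' t ≤ pooledMean n Y j t}

/-- Fuel-based recursion implementing the SDMMSA step-down procedure: on data range `[1,t]`,
every `i ≥ i₁ = firstIdx n Y t` gets the pooled mean `Ȳ_{i₁,t}` of the top block, and for
`i < i₁` we recurse on the data range `[1, i₁ - 1]`.  A fuel of `t` suffices since the
range shrinks strictly at each step. -/
def sdmmsaAux (n Y : ℕ → ℝ) : ℕ → ℕ → ℕ → ℝ
  | 0, _, _ => 0
  | fuel + 1, t, i =>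
      if firstIdx n Y t ≤ i then pooledMean n Y (firstIdx n Y t) t
      else sdmmsaAux n Y fuel (firstIdx n Y t - 1) i

/-- `muhat n Y k i` is the SDMMSA estimate `μ̂_i` computed from the data
`(Y_1,n_1),…,(Y_k,n_k)`. -/
def muhat (n Y : ℕ → ℝ) (k i : ℕ) : ℝ := sdmmsaAux n Y k k i

/-- The SDMMSA indices `i_u` computed from the data `(Y_1,n_1),…,(Y_k,n_k)`:
`sdIdx n Y k 0 = i_0 = k+1` and `i_{u+1}` is the first SDMMSA index of `[1, i_u - 1]`. -/
def sdIdx (n Y : ℕ → ℝ) (k : ℕ) : ℕ → ℕ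
  | 0 => k + 1
  | u + 1 => firstIdx n Y (sdIdx n Y k u - 1)

/-- The number of steps `h` of the SDMMSA: the first `u` with `i_u = 1`. -/
def sdSteps (n Y : ℕ → ℝ) (k : ℕ) : ℕ := sInf {u | sdIdx n Y k u = 1}

end SDMMSA

open MeasureTheory ProbabilityTheory

/-!
The estimator has the min–max form `μ̂_i = min_{i ≤ t ≤ k} max_{1 ≤ s ≤ t} Ȳ_{s,t}`: the step-down
procedure just evaluates this expression block by block, because a pooled mean of `[s, t]` is a
weighted average of the pooled means of `[s, m]` and `[m+1, t]`. Pooled means with positive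
weights are nondecreasing in the data, hence so is `μ̂_i`. Finally, raising `μ_j` amounts to
translating the `j`-th Gaussian coordinate by `μ'_j - μ_j ≥ 0`, and a translation by a nonnegative
vector maps every upper set into itself.
-/

lemma Finset.sum_Icc_eq_sum_Icc_add_sum_Icc {M : Type*} [AddCommMonoid M] (f : ℕ → M)
    {s m t : ℕ} (hsm : s ≤ m + 1) (hmt : m ≤ t) :
    ∑ h ∈ Icc s t, f h = ∑ h ∈ Icc s m, f h + ∑ h ∈ Icc (m + 1) t, f h := by
  simp only [← Ico_add_one_right_eq_Icc]
  exact (sum_Ico_consecutive f hsm (by omega)).symm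

section

variable {n : ℕ → ℝ}

lemma pooledWeight_pos {s t : ℕ} (hs : 1 ≤ s) (hst : s ≤ t)
    (hn : ∀ h, 1 ≤ h → h ≤ t → 0 < n h) : 0 < pooledWeight n s t :=
  sum_pos (fun h hh => hn h (hs.trans (mem_Icc.1 hh).1) (mem_Icc.1 hh).2)
    ⟨s, mem_Icc.2 ⟨le_rfl, hst⟩⟩

lemma pooledMean_neg (Y : ℕ → ℝ) (s t : ℕ) :
    pooledMean n (-Y) s t = -pooledMean n Y s t := by
  simp only [pooledMean, Pi.neg_apply, mul_neg, sum_neg_distrib, neg_div]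

lemma pooledMean_monotone {s t : ℕ} (hs : 1 ≤ s) (hst : s ≤ t)
    (hn : ∀ h, 1 ≤ h → h ≤ t → 0 < n h) : Monotone fun Y => pooledMean n Y s t := by
  intro Y Y' hY
  refine div_le_div_of_nonneg_right (sum_le_sum fun h hh => ?_) (pooledWeight_pos hs hst hn).le
  rw [mem_Icc] at hh
  exact mul_le_mul_of_nonneg_left (hY h) (hn h (hs.trans hh.1) hh.2).le

lemma le_pooledMean_left {Y : ℕ → ℝ} {s m t : ℕ} {c : ℝ} (hs : 1 ≤ s) (hsm : s ≤ m)
    (hmt : m < t) (hn : ∀ h, 1 ≤ h → h ≤ t → 0 < n h)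
    (hc : c ≤ pooledMean n Y s t) (hright : pooledMean n Y (m + 1) t ≤ c) :
    c ≤ pooledMean n Y s m := by
  have hW₁ := pooledWeight_pos hs hsm fun h h₁ h₂ => hn h h₁ (by omega)
  have hW₂ := pooledWeight_pos (s := m + 1) (by omega) hmt hn
  have hW := pooledWeight_pos hs (hsm.trans hmt.le) hn
  have hsplitW : pooledWeight n s t = pooledWeight n s m + pooledWeight n (m + 1) t :=
    sum_Icc_eq_sum_Icc_add_sum_Icc _ (by omega) hmt.le
  rw [pooledMean, le_div_iff₀ hW, hsplitW,
    sum_Icc_eq_sum_Icc_add_sum_Icc _ (by omega) hmt.le] at hc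
  rw [pooledMean, div_le_iff₀ hW₂] at hright
  rw [pooledMean, le_div_iff₀ hW₁]
  linarith

lemma pooledMean_left_le {Y : ℕ → ℝ} {s m t : ℕ} {c : ℝ} (hs : 1 ≤ s) (hsm : s ≤ m)
    (hmt : m < t) (hn : ∀ h, 1 ≤ h → h ≤ t → 0 < n h)
    (hc : pooledMean n Y s t ≤ c) (hright : c ≤ pooledMean n Y (m + 1) t) :
    pooledMean n Y s m ≤ c := by
  have := le_pooledMean_left (Y := -Y) (c := -c) hs hsm hmt hn
  simp only [pooledMean_neg, neg_le_neg_iff] at this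
  exact this hc hright

lemma firstIdx_spec (Y : ℕ → ℝ) {t : ℕ} (ht : 1 ≤ t) :
    1 ≤ firstIdx n Y t ∧ firstIdx n Y t ≤ t ∧
      ∀ s, 1 ≤ s → s ≤ t → pooledMean n Y s t ≤ pooledMean n Y (firstIdx n Y t) t := by
  obtain ⟨b, hb, hmax⟩ := exists_max_image (Icc 1 t) (fun s => pooledMean n Y s t)
    ⟨1, mem_Icc.2 ⟨le_rfl, ht⟩⟩
  rw [mem_Icc] at hb
  have hne : Set.Nonempty {a | 1 ≤ a ∧ a ≤ t ∧
      ∀ s, 1 ≤ s → s ≤ t → pooledMean n Y s t ≤ pooledMean n Y a t} :=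
    ⟨b, hb.1, hb.2, fun s h₁ h₂ => hmax s (mem_Icc.2 ⟨h₁, h₂⟩)⟩
  exact Nat.sInf_mem hne

/-- `max_{1 ≤ s ≤ t} Ȳ_{s,t}`, attained at `s = firstIdx n Y t`. -/
noncomputable def maxPooledMean (n Y : ℕ → ℝ) (t : ℕ) : ℝ := pooledMean n Y (firstIdx n Y t) t

lemma pooledMean_le_maxPooledMean (Y : ℕ → ℝ) {s t : ℕ} (hs : 1 ≤ s) (hst : s ≤ t) :
    pooledMean n Y s t ≤ maxPooledMean n Y t :=
  (firstIdx_spec Y (hs.trans hst)).2.2 s hs hst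

lemma maxPooledMean_le {Y : ℕ → ℝ} {t : ℕ} {c : ℝ} (ht : 1 ≤ t)
    (hc : ∀ s, 1 ≤ s → s ≤ t → pooledMean n Y s t ≤ c) : maxPooledMean n Y t ≤ c :=
  hc _ (firstIdx_spec Y ht).1 (firstIdx_spec Y ht).2.1

lemma maxPooledMean_monotone {t : ℕ} (ht : 1 ≤ t) (hn : ∀ h, 1 ≤ h → h ≤ t → 0 < n h) :
    Monotone fun Y => maxPooledMean n Y t := by
  intro Y Y' hY
  refine maxPooledMean_le ht fun s hs hst => ?_
  exact (pooledMean_monotone hs hst hn hY).trans (pooledMean_le_maxPooledMean Y' hs hst)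

lemma maxPooledMean_le_maxPooledMean_of_firstIdx_le {Y : ℕ → ℝ} {t t' : ℕ}
    (hat' : firstIdx n Y t ≤ t') (ht't : t' ≤ t) (hn : ∀ h, 1 ≤ h → h ≤ t → 0 < n h) :
    maxPooledMean n Y t ≤ maxPooledMean n Y t' := by
  rcases ht't.eq_or_lt with rfl | hlt
  · exact le_rfl
  obtain ⟨ha, -, hmax⟩ := firstIdx_spec (n := n) Y (by omega : 1 ≤ t)
  exact (le_pooledMean_left ha hat' hlt hn le_rfl (hmax _ (by omega) hlt)).trans
    (pooledMean_le_maxPooledMean Y ha hat')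

lemma maxPooledMean_pred_firstIdx_le {Y : ℕ → ℝ} {t : ℕ} (ht : 1 ≤ t) (ha : 2 ≤ firstIdx n Y t)
    (hn : ∀ h, 1 ≤ h → h ≤ t → 0 < n h) :
    maxPooledMean n Y (firstIdx n Y t - 1) ≤ maxPooledMean n Y t := by
  obtain ⟨-, hat, hmax⟩ := firstIdx_spec (n := n) Y ht
  refine maxPooledMean_le (by omega) fun s hs hsa => ?_
  refine pooledMean_left_le hs hsa (by omega) hn (hmax s hs (by omega)) ?_
  rw [Nat.sub_add_cancel (by omega : 1 ≤ firstIdx n Y t)]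
  exact le_rfl

theorem sdmmsaAux_eq_inf' (Y : ℕ → ℝ) {fuel t i : ℕ} (hi : 1 ≤ i) (hit : i ≤ t)
    (hfuel : t ≤ fuel) (hn : ∀ h, 1 ≤ h → h ≤ t → 0 < n h) :
    sdmmsaAux n Y fuel t i = (Icc i t).inf' (nonempty_Icc.2 hit) (maxPooledMean n Y) := by
  induction fuel generalizing t with
  | zero => omega
  | succ fuel ih =>
    obtain ⟨ha, hat, -⟩ := firstIdx_spec (n := n) Y (hi.trans hit)
    set a := firstIdx n Y t
    have hupper : ∀ t', a ≤ t' → t' ≤ t → maxPooledMean n Y t ≤ maxPooledMean n Y t' :=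
      fun t' h₁ h₂ => maxPooledMean_le_maxPooledMean_of_firstIdx_le h₁ h₂ hn
    rw [sdmmsaAux]
    split_ifs with hai
    · refine le_antisymm (le_inf' _ _ fun t' ht' => ?_) (inf'_le _ (right_mem_Icc.2 hit))
      rw [mem_Icc] at ht'
      exact hupper t' (hai.trans ht'.1) ht'.2
    · rw [ih (by omega : i ≤ a - 1) (by omega) fun h h₁ h₂ => hn h h₁ (by omega)]
      refine le_antisymm (le_inf' _ _ fun t' ht' => ?_)
        (le_inf' _ _ fun t' ht' => inf'_le _ (Icc_subset_Icc_right (by omega) ht'))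
      rw [mem_Icc] at ht'
      rcases le_or_gt t' (a - 1) with hta | hta
      · exact inf'_le _ (mem_Icc.2 ⟨ht'.1, hta⟩)
      · calc (Icc i (a - 1)).inf' _ (maxPooledMean n Y)
            ≤ maxPooledMean n Y (a - 1) := inf'_le _ (mem_Icc.2 ⟨by omega, le_rfl⟩)
          _ ≤ maxPooledMean n Y t := maxPooledMean_pred_firstIdx_le (by omega) (by omega) hn
          _ ≤ maxPooledMean n Y t' := hupper t' (by omega) ht'.2

theorem muhat_monotone {k i : ℕ} (hi : 1 ≤ i) (hik : i ≤ k)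
    (hn : ∀ h, 1 ≤ h → h ≤ k → 0 < n h) : Monotone fun Y => muhat n Y k i := by
  intro Y Y' hY
  simp only [muhat, sdmmsaAux_eq_inf' _ hi hik le_rfl hn]
  exact inf'_mono_fun fun t ht =>
    maxPooledMean_monotone (hi.trans (mem_Icc.1 ht).1)
      (fun h h₁ h₂ => hn h h₁ (h₂.trans (mem_Icc.1 ht).2)) hY

end

lemma measure_pi_gaussianReal_le_of_isUpperSet {ι : Type*} [Fintype ι] {m m' : ι → ℝ}
    (hm : m ≤ m') (v : ι → NNReal) {S : Set (ι → ℝ)} (hS : IsUpperSet S) :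
    Measure.pi (fun a => gaussianReal (m a) (v a)) S ≤
      Measure.pi (fun a => gaussianReal (m' a) (v a)) S := by
  have hshift : MeasurePreserving (fun ω a => ω a + (m' a - m a))
      (Measure.pi fun a => gaussianReal (m a) (v a))
      (Measure.pi fun a => gaussianReal (m' a) (v a)) := by
    refine measurePreserving_pi _ _ fun a => ⟨measurable_add_const _, ?_⟩
    rw [gaussianReal_map_add_const, add_sub_cancel]
  have hS_preimage : S ⊆ (fun ω a => ω a + (m' a - m a)) ⁻¹' S := fun ω hω =>
    hS (fun a => le_add_of_nonneg_right (sub_nonneg.2 (hm a))) hω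
  rw [← hshift.map_eq]
  exact (measure_mono hS_preimage).trans (Measure.le_map_apply hshift.measurable.aemeasurable S)

theorem sdmmsa_stochastically_monotone_general (k : ℕ) (n : ℕ → ℝ)
    (hn : ∀ h, 1 ≤ h → h ≤ k → 0 < n h)
    (i j : ℕ) (hi1 : 1 ≤ i) (hik : i ≤ k)
    (σ : ℝ) (μ μ' : ℕ → ℝ)
    (hle : μ j ≤ μ' j) (heq : ∀ j', j' ≠ j → μ j' = μ' j') (x : ℝ) :
    (Measure.pi fun v : Fin k =>
        gaussianReal (μ ((v : ℕ) + 1)) ((σ ^ 2 / n ((v : ℕ) + 1)).toNNReal))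
      {ω : Fin k → ℝ |
        x < muhat n (fun t => if h : t - 1 < k then ω ⟨t - 1, h⟩ else 0) k i} ≤
    (Measure.pi fun v : Fin k =>
        gaussianReal (μ' ((v : ℕ) + 1)) ((σ ^ 2 / n ((v : ℕ) + 1)).toNNReal))
      {ω : Fin k → ℝ |
        x < muhat n (fun t => if h : t - 1 < k then ω ⟨t - 1, h⟩ else 0) k i} := by
  have hμ : (fun v : Fin k => μ ((v : ℕ) + 1)) ≤
      fun v : Fin k => μ' ((v : ℕ) + 1) := fun v => by
    dsimp only
    by_cases hv : (v : ℕ) + 1 = j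
    · rw [hv]; exact hle
    · exact (heq _ hv).le
  have hdata : Monotone fun (ω : Fin k → ℝ) (t : ℕ) =>
      if h : t - 1 < k then ω ⟨t - 1, h⟩ else 0 := fun ω ω' hω t => by
    dsimp only
    split_ifs
    exacts [hω _, le_rfl]
  exact measure_pi_gaussianReal_le_of_isUpperSet hμ _ <| isUpperSet_setOfPred.2
    fun ω ω' hω hx => hx.trans_le (muhat_monotone hi1 hik hn (hdata hω))

/-- Theorem 3, stochastic part: if `Ȳ_1,…,Ȳ_k` are independent with
`Ȳ_j ~ N(μ_j, σ²/n_j)`, then for all `i, j ∈ [1,k]` and every real `x`,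
`P(μ̂_{i,k}(Ȳ_1,…,Ȳ_k) > x)` is nondecreasing in `μ_j` when the other means and `σ` are
held fixed; i.e. the distribution of `μ̂_{i,k}` is stochastically nondecreasing in each
`μ_j`.  (The coordinate `v : Fin k` of the product space carries the sample mean
`Ȳ_{v+1}`.) -/
theorem sdmmsa_stochastically_monotone (k : ℕ) (hk : 1 ≤ k) (n : ℕ → ℝ)
    (hn : ∀ h, 1 ≤ h → h ≤ k → 0 < n h)
    (i j : ℕ) (hi1 : 1 ≤ i) (hik : i ≤ k) (hj1 : 1 ≤ j) (hjk : j ≤ k)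
    (σ : ℝ) (hσ : 0 < σ) (μ μ' : ℕ → ℝ)
    (hle : μ j ≤ μ' j) (heq : ∀ j', j' ≠ j → μ j' = μ' j') (x : ℝ) :
    (Measure.pi fun v : Fin k =>
        gaussianReal (μ ((v : ℕ) + 1)) ((σ ^ 2 / n ((v : ℕ) + 1)).toNNReal))
      {ω : Fin k → ℝ |
        x < muhat n (fun t => if h : t - 1 < k then ω ⟨t - 1, h⟩ else 0) k i} ≤
    (Measure.pi fun v : Fin k =>
        gaussianReal (μ' ((v : ℕ) + 1)) ((σ ^ 2 / n ((v : ℕ) + 1)).toNNReal))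
      {ω : Fin k → ℝ |
        x < muhat n (fun t => if h : t - 1 < k then ω ⟨t - 1, h⟩ else 0) k i} :=
  sdmmsa_stochastically_monotone_general k n hn i j hi1 hik σ μ μ' hle heq x
end

section
/- (Equation (2.23): recursive structure of SDMMSA) Let m ≥ 1 and consider data (Ȳ_1,n_1),…,(Ȳ_{m+1},n_{m+1}). Let μ̂_{j,m} denote the SDMMSA estimates computed from the first m data points. Then for every i ∈ [1,m+1], the SDMMSA estimate from all m+1 points equals the SDMMSA estimate computed from the modified data in which the first m values are replaced by their m-point estimates: μ̂_{i,m+1}(Ȳ_1,…,Ȳ_m,Ȳ_{m+1}) = μ̂_{i,m+1}(μ̂_{1,m},…,μ̂_{m,m},Ȳ_{m+1}) (with the same weights n_1,…,n_{m+1}). -/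
open Finset

/-!
Let `[a, T]` be the top block of the data on `[1, T]`: the longest suffix of maximal pooled mean
`c`. Replacing the values on `[1, t]` (`t ≤ T`) by their `t`-point estimates keeps the total
sum, and when `a ≤ t` the `t`-point estimates below `a` are those computed from `[1, a - 1]`
alone; so the smoothed data still have pooled mean `c` on `[a, T]`. No suffix mean of the
smoothed data exceeds `c`, since each block of a `t`-point estimate carries a pooled mean of the
raw data, and suffixes starting below `a` stay strictly below `c`. Hence the smoothed data have
the same top block with the same value, and induction on the rest `[1, a - 1]` finishes.
-/

section PooledMean

variable {n : ℕ → ℝ}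

theorem sum_Icc_split (f : ℕ → ℝ) {i k j : ℕ} (hik : i ≤ k + 1) (hkj : k ≤ j) :
    ∑ h ∈ Icc i j, f h = ∑ h ∈ Icc i k, f h + ∑ h ∈ Icc (k + 1) j, f h := by
  rw [← Ico_add_one_right_eq_Icc, ← Ico_add_one_right_eq_Icc, ← Ico_add_one_right_eq_Icc,
    sum_Ico_consecutive f hik (by omega)]

theorem pooledWeight_pos_s11 (hn : ∀ h, 0 < n h) {i j : ℕ} (hij : i ≤ j) :
    0 < pooledWeight n i j :=
  sum_pos (fun h _ => hn h) ⟨i, mem_Icc.2 ⟨le_rfl, hij⟩⟩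

theorem pooledWeight_mul_pooledMean (hn : ∀ h, 0 < n h) (Y : ℕ → ℝ) {i j : ℕ} (hij : i ≤ j) :
    pooledWeight n i j * pooledMean n Y i j = ∑ h ∈ Icc i j, n h * Y h :=
  mul_div_cancel₀ _ (pooledWeight_pos_s11 hn hij).ne'

theorem pooledMean_congr {n' Y Y' : ℕ → ℝ} {i j : ℕ} (hn : ∀ h, i ≤ h → h ≤ j → n h = n' h)
    (hY : ∀ h, i ≤ h → h ≤ j → Y h = Y' h) : pooledMean n Y i j = pooledMean n' Y' i j := by
  have hmem : ∀ h ∈ Icc i j, n h = n' h ∧ Y h = Y' h := fun h hh =>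
    ⟨hn h (mem_Icc.1 hh).1 (mem_Icc.1 hh).2, hY h (mem_Icc.1 hh).1 (mem_Icc.1 hh).2⟩
  unfold pooledMean pooledWeight
  rw [sum_congr rfl fun h hh => by rw [(hmem h hh).1, (hmem h hh).2],
    sum_congr rfl fun h hh => (hmem h hh).1]

theorem pooledMean_const (hn : ∀ h, 0 < n h) {Y : ℕ → ℝ} {i j : ℕ} {c : ℝ} (hij : i ≤ j)
    (hY : ∀ h, i ≤ h → h ≤ j → Y h = c) : pooledMean n Y i j = c := by
  have hsum : ∑ h ∈ Icc i j, n h * Y h = pooledWeight n i j * c := by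
    rw [pooledWeight, sum_mul]
    exact sum_congr rfl fun h hh => by rw [hY h (mem_Icc.1 hh).1 (mem_Icc.1 hh).2]
  rw [pooledMean, hsum, mul_div_cancel_left₀ _ (pooledWeight_pos_s11 hn hij).ne']

theorem pooledWeight_split {i k j : ℕ} (hik : i ≤ k) (hkj : k < j) :
    pooledWeight n i j = pooledWeight n i k + pooledWeight n (k + 1) j :=
  sum_Icc_split n (by omega) hkj.le

theorem pooledMean_split (hn : ∀ h, 0 < n h) (Y : ℕ → ℝ) {i k j : ℕ} (hik : i ≤ k) (hkj : k < j) :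
    (pooledWeight n i k + pooledWeight n (k + 1) j) * pooledMean n Y i j =
      pooledWeight n i k * pooledMean n Y i k +
        pooledWeight n (k + 1) j * pooledMean n Y (k + 1) j := by
  rw [← pooledWeight_split hik hkj, pooledWeight_mul_pooledMean hn Y (by omega),
    pooledWeight_mul_pooledMean hn Y hik, pooledWeight_mul_pooledMean hn Y hkj,
    sum_Icc_split _ (by omega) hkj.le]

section Mediant

variable {Y : ℕ → ℝ} {i k j : ℕ} {c : ℝ}

theorem pooledMean_le_max (hn : ∀ h, 0 < n h) (hik : i ≤ k) (hkj : k < j) :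
    pooledMean n Y i j ≤ max (pooledMean n Y i k) (pooledMean n Y (k + 1) j) := by
  have hsplit := pooledMean_split hn Y hik hkj
  have hA := pooledWeight_pos_s11 hn hik
  have hB := pooledWeight_pos_s11 hn (Nat.succ_le_of_lt hkj)
  nlinarith [le_max_left (pooledMean n Y i k) (pooledMean n Y (k + 1) j),
    le_max_right (pooledMean n Y i k) (pooledMean n Y (k + 1) j)]

theorem min_le_pooledMean (hn : ∀ h, 0 < n h) (hik : i ≤ k) (hkj : k < j) :
    min (pooledMean n Y i k) (pooledMean n Y (k + 1) j) ≤ pooledMean n Y i j := by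
  have hsplit := pooledMean_split hn Y hik hkj
  have hA := pooledWeight_pos_s11 hn hik
  have hB := pooledWeight_pos_s11 hn (Nat.succ_le_of_lt hkj)
  nlinarith [min_le_left (pooledMean n Y i k) (pooledMean n Y (k + 1) j),
    min_le_right (pooledMean n Y i k) (pooledMean n Y (k + 1) j)]

theorem pooledMean_lt_of_lt_of_le (hn : ∀ h, 0 < n h) (hik : i ≤ k) (hkj : k < j)
    (hleft : pooledMean n Y i k < c) (hright : pooledMean n Y (k + 1) j ≤ c) :
    pooledMean n Y i j < c := by
  have hsplit := pooledMean_split hn Y hik hkj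
  have hA := pooledWeight_pos_s11 hn hik
  have hB := pooledWeight_pos_s11 hn (Nat.succ_le_of_lt hkj)
  nlinarith

theorem pooledMean_left_lt (hn : ∀ h, 0 < n h) (hik : i ≤ k) (hkj : k < j)
    (h : pooledMean n Y i j < c) (hright : c ≤ pooledMean n Y (k + 1) j) :
    pooledMean n Y i k < c := by
  by_contra hleft
  exact (min_le_pooledMean hn hik hkj).not_gt (lt_of_lt_of_le h (le_min (not_lt.1 hleft) hright))

theorem le_pooledMean_left_s11 (hn : ∀ h, 0 < n h) (hik : i ≤ k) (hkj : k < j)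
    (h : c ≤ pooledMean n Y i j) (hright : pooledMean n Y (k + 1) j ≤ c) :
    c ≤ pooledMean n Y i k :=
  not_lt.1 fun hleft => (pooledMean_lt_of_lt_of_le hn hik hkj hleft hright).not_ge h

end Mediant

theorem pooledMean_le_of_const_block {X : ℕ → ℝ} (hn : ∀ h, 0 < n h) {b j k T : ℕ} {v c : ℝ}
    (hX : ∀ h, b ≤ h → h ≤ k → X h = v) (hbj : b ≤ j) (hjk : j ≤ k) (hkT : k ≤ T)
    (hb : pooledMean n X b T ≤ c) (hk : k < T → pooledMean n X (k + 1) T ≤ c) :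
    pooledMean n X j T ≤ c := by
  have hjv : pooledMean n X j k = v := pooledMean_const hn hjk fun h h1 h2 => hX h (hbj.trans h1) h2
  rcases hkT.lt_or_eq with hkT | rfl
  · have hmax := pooledMean_le_max hn (Y := X) hjk hkT
    rw [hjv] at hmax
    rcases le_or_gt (pooledMean n X j T) v with hv | hv
    · rcases hbj.lt_or_eq with hbj | rfl
      · obtain ⟨i, rfl⟩ : ∃ i, j = i + 1 := ⟨j - 1, by omega⟩
        have hmin := min_le_pooledMean hn (Y := X) (i := b) (k := i) (j := T) (by omega) (by omega)
        rw [pooledMean_const hn (by omega) fun h h1 h2 => hX h h1 (by omega),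
          min_eq_right hv] at hmin
        exact hmin.trans hb
      · exact hb
    · exact ((le_max_iff.1 hmax).resolve_left hv.not_ge).trans (hk hkT)
  · rwa [hjv, ← pooledMean_const hn (hbj.trans hjk) hX]

end PooledMean

section FirstIdx

variable (n Y : ℕ → ℝ) {t : ℕ}

theorem firstIdx_mem (ht : 1 ≤ t) :
    firstIdx n Y t ∈ {j | 1 ≤ j ∧ j ≤ t ∧
      ∀ j', 1 ≤ j' → j' ≤ t → pooledMean n Y j' t ≤ pooledMean n Y j t} := by
  obtain ⟨b, hb, hmax⟩ := exists_max_image (Icc 1 t) (fun j => pooledMean n Y j t)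
    ⟨1, mem_Icc.2 ⟨le_rfl, ht⟩⟩
  exact Nat.sInf_mem ⟨b, (mem_Icc.1 hb).1, (mem_Icc.1 hb).2,
    fun j' h1 h2 => hmax j' (mem_Icc.2 ⟨h1, h2⟩)⟩

theorem one_le_firstIdx (ht : 1 ≤ t) : 1 ≤ firstIdx n Y t := (firstIdx_mem n Y ht).1

theorem firstIdx_le_self : firstIdx n Y t ≤ t := by
  rcases Nat.eq_zero_or_pos t with rfl | ht
  · refine (Nat.sInf_eq_zero.2 (Or.inr ?_)).le
    exact Set.eq_empty_of_forall_notMem fun j hj => by have := hj.1; have := hj.2.1; omega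
  · exact (firstIdx_mem n Y ht).2.1

theorem pooledMean_le_pooledMean_firstIdx {j : ℕ} (hj : 1 ≤ j) (hjt : j ≤ t) :
    pooledMean n Y j t ≤ pooledMean n Y (firstIdx n Y t) t :=
  (firstIdx_mem n Y (hj.trans hjt)).2.2 j hj hjt

theorem pooledMean_lt_pooledMean_firstIdx {j : ℕ} (hj : 1 ≤ j) (hjF : j < firstIdx n Y t) :
    pooledMean n Y j t < pooledMean n Y (firstIdx n Y t) t := by
  have hjt : j ≤ t := hjF.le.trans (firstIdx_le_self n Y)
  refine lt_of_not_ge fun hge => hjF.not_ge (Nat.sInf_le ⟨hj, hjt, fun j' h1 h2 => ?_⟩)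
  exact (pooledMean_le_pooledMean_firstIdx n Y h1 h2).trans hge

theorem firstIdx_eq_of_forall {a : ℕ} (ha : 1 ≤ a) (hat : a ≤ t)
    (hle : ∀ j, 1 ≤ j → j ≤ t → pooledMean n Y j t ≤ pooledMean n Y a t)
    (hlt : ∀ j, 1 ≤ j → j < a → pooledMean n Y j t < pooledMean n Y a t) :
    firstIdx n Y t = a := by
  refine le_antisymm (Nat.sInf_le ⟨ha, hat, hle⟩) (not_lt.1 fun hF => ?_)
  exact (hlt _ (one_le_firstIdx n Y (ha.trans hat)) hF).not_ge
    (pooledMean_le_pooledMean_firstIdx n Y ha hat)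

theorem firstIdx_congr {n' Y' : ℕ → ℝ} (hn : ∀ h, 1 ≤ h → h ≤ t → n h = n' h)
    (hY : ∀ h, 1 ≤ h → h ≤ t → Y h = Y' h) : firstIdx n Y t = firstIdx n' Y' t := by
  have hmean : ∀ j, 1 ≤ j → pooledMean n Y j t = pooledMean n' Y' j t := fun j hj =>
    pooledMean_congr (fun h h1 h2 => hn h (hj.trans h1) h2) (fun h h1 h2 => hY h (hj.trans h1) h2)
  unfold firstIdx
  congr 1
  ext j
  simp only [Set.mem_ofPred_eq]
  exact and_congr_right fun hj => and_congr_right fun _ =>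
    forall₂_congr fun j' hj' => by rw [hmean j' hj', hmean j hj]

theorem pooledMean_pred_lt_pooledMean_firstIdx {n : ℕ → ℝ} (hn : ∀ h, 0 < n h) (Y : ℕ → ℝ)
    {j : ℕ} (hj : 1 ≤ j) (hjF : j < firstIdx n Y t) :
    pooledMean n Y j (firstIdx n Y t - 1) < pooledMean n Y (firstIdx n Y t) t := by
  have hF := firstIdx_le_self n Y (t := t)
  have hsplit := pooledMean_lt_pooledMean_firstIdx n Y hj hjF
  rw [← Nat.sub_add_cancel (hj.trans_lt hjF : 1 < firstIdx n Y t).le] at hsplit ⊢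
  exact pooledMean_left_lt hn (by omega) (by omega) hsplit le_rfl

end FirstIdx

section Muhat

variable {n : ℕ → ℝ} {Y : ℕ → ℝ}

theorem sdmmsaAux_eq_muhat {i : ℕ} (hi : 1 ≤ i) :
    ∀ t f, i ≤ t → t ≤ f → sdmmsaAux n Y f t i = muhat n Y t i := by
  intro t
  induction t using Nat.strong_induction_on with
  | _ t ih =>
    intro f hit htf
    obtain ⟨g, rfl⟩ : ∃ g, f = g + 1 := ⟨f - 1, by omega⟩
    obtain ⟨u, rfl⟩ : ∃ u, t = u + 1 := ⟨t - 1, by omega⟩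
    simp only [muhat, sdmmsaAux]
    split_ifs with hF
    · rfl
    · have hF' := firstIdx_le_self n Y (t := u + 1)
      rw [ih _ (by omega) g (by omega) (by omega), ih _ (by omega) u (by omega) (by omega)]

theorem muhat_of_firstIdx_le {t i : ℕ} (ht : 1 ≤ t) (hi : firstIdx n Y t ≤ i) :
    muhat n Y t i = pooledMean n Y (firstIdx n Y t) t := by
  obtain ⟨u, rfl⟩ : ∃ u, t = u + 1 := ⟨t - 1, by omega⟩
  simp only [muhat, sdmmsaAux, if_pos hi]

theorem muhat_of_lt_firstIdx {t i : ℕ} (hi : 1 ≤ i) (hiF : i < firstIdx n Y t) :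
    muhat n Y t i = muhat n Y (firstIdx n Y t - 1) i := by
  have hF := firstIdx_le_self n Y (t := t)
  obtain ⟨u, rfl⟩ : ∃ u, t = u + 1 := ⟨t - 1, by omega⟩
  simp only [muhat, sdmmsaAux, if_neg (not_le.2 hiF)]
  exact sdmmsaAux_eq_muhat hi _ _ (by omega) (by omega)

theorem muhat_congr {n' Y' : ℕ → ℝ} {t : ℕ} (hn : ∀ h, 1 ≤ h → h ≤ t → n h = n' h)
    (hY : ∀ h, 1 ≤ h → h ≤ t → Y h = Y' h) {i : ℕ} (hi : 1 ≤ i) (hit : i ≤ t) :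
    muhat n Y t i = muhat n' Y' t i := by
  induction t using Nat.strong_induction_on with
  | _ t ih =>
    have hF : firstIdx n Y t = firstIdx n' Y' t := firstIdx_congr n Y hn hY
    have hFt := firstIdx_le_self n Y (t := t)
    rcases le_or_gt (firstIdx n Y t) i with hFi | hiF
    · rw [muhat_of_firstIdx_le (hi.trans hit) hFi,
        muhat_of_firstIdx_le (n := n') (Y := Y') (hi.trans hit) (hF ▸ hFi), ← hF]
      have hF1 := one_le_firstIdx n Y (hi.trans hit)
      exact pooledMean_congr (fun h h1 h2 => hn h (by omega) h2) (fun h h1 h2 => hY h (by omega) h2)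
    · rw [muhat_of_lt_firstIdx hi hiF, muhat_of_lt_firstIdx (n := n') (Y := Y') hi (hF ▸ hiF), ← hF]
      exact ih _ (by omega) (fun h h1 h2 => hn h h1 (by omega))
        (fun h h1 h2 => hY h h1 (by omega)) (by omega)

theorem sum_muhat (hn : ∀ h, 0 < n h) (t : ℕ) :
    ∑ h ∈ Icc 1 t, n h * muhat n Y t h = ∑ h ∈ Icc 1 t, n h * Y h := by
  induction t using Nat.strong_induction_on with
  | _ t ih =>
    rcases Nat.eq_zero_or_pos t with rfl | ht
    · rfl
    set F := firstIdx n Y t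
    have hF1 : 1 ≤ F := one_le_firstIdx n Y ht
    have hFt : F ≤ t := firstIdx_le_self n Y
    have hlower : ∑ h ∈ Icc 1 (F - 1), n h * muhat n Y t h = ∑ h ∈ Icc 1 (F - 1), n h * Y h := by
      rw [← ih (F - 1) (by omega)]
      exact sum_congr rfl fun h hh => by
        rw [muhat_of_lt_firstIdx (mem_Icc.1 hh).1 (by have := (mem_Icc.1 hh).2; omega)]
    have htop : ∑ h ∈ Icc F t, n h * muhat n Y t h = ∑ h ∈ Icc F t, n h * Y h := by
      rw [← pooledWeight_mul_pooledMean hn _ hFt, ← pooledWeight_mul_pooledMean hn _ hFt,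
        pooledMean_const hn hFt fun h h1 _ => muhat_of_firstIdx_le ht h1]
    rw [sum_Icc_split _ (k := F - 1) (by omega) (by omega),
      sum_Icc_split (fun h => n h * Y h) (k := F - 1) (by omega) (by omega),
      Nat.sub_add_cancel hF1, hlower, htop]

end Muhat

section Nesting

variable {n : ℕ → ℝ} {Y : ℕ → ℝ} {T : ℕ}

theorem firstIdx_le_firstIdx (hn : ∀ h, 0 < n h) {t : ℕ} (hat : firstIdx n Y T ≤ t)
    (htT : t ≤ T) : firstIdx n Y T ≤ firstIdx n Y t := by
  set a := firstIdx n Y T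
  by_contra! hba
  set b := firstIdx n Y t
  have haT : a ≤ T := firstIdx_le_self n Y
  have hb1 : 1 ≤ b := one_le_firstIdx n Y (by omega)
  have hleft : pooledMean n Y b (a - 1) < pooledMean n Y a T :=
    pooledMean_pred_lt_pooledMean_firstIdx hn Y hb1 hba
  have hright : pooledMean n Y a T ≤ pooledMean n Y a t := by
    rcases htT.lt_or_eq with htT | rfl
    · exact le_pooledMean_left_s11 hn hat htT le_rfl
        (pooledMean_le_pooledMean_firstIdx n Y (by omega) (by omega))
    · exact le_rfl
  have hlt : pooledMean n Y b t < pooledMean n Y a t := by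
    refine pooledMean_lt_of_lt_of_le hn (k := a - 1) (by omega) (by omega)
      (hleft.trans_le hright) ?_
    rw [Nat.sub_add_cancel (by omega : 1 ≤ a)]
  exact hlt.not_ge (pooledMean_le_pooledMean_firstIdx n Y (by omega) hat)

/-- The top block of the data on `[1, T]` is a union of blocks of the SDMMSA on `[1, t]`. -/
theorem muhat_eq_muhat_pred_firstIdx (hn : ∀ h, 0 < n h) :
    ∀ t, firstIdx n Y T ≤ t → t ≤ T → ∀ h, 1 ≤ h → h < firstIdx n Y T →
      muhat n Y t h = muhat n Y (firstIdx n Y T - 1) h := by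
  intro t
  induction t using Nat.strong_induction_on with
  | _ t ih =>
    intro hat htT h h1 hha
    have hab := firstIdx_le_firstIdx hn hat htT
    have hbt : firstIdx n Y t ≤ t := firstIdx_le_self n Y
    rw [muhat_of_lt_firstIdx h1 (hha.trans_le hab)]
    rcases hab.lt_or_eq with hab | hab
    · exact ih _ (by omega) (by omega) (by omega) h h1 hha
    · rw [hab]

end Nesting

noncomputable def smoothPrefix (n Y : ℕ → ℝ) (t : ℕ) : ℕ → ℝ :=
  fun h => if 1 ≤ h ∧ h ≤ t then muhat n Y t h else Y h

section SmoothPrefix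

variable {n Y : ℕ → ℝ} {t T : ℕ}

theorem smoothPrefix_of_le {h : ℕ} (h1 : 1 ≤ h) (h2 : h ≤ t) :
    smoothPrefix n Y t h = muhat n Y t h := if_pos ⟨h1, h2⟩

theorem smoothPrefix_of_lt {h : ℕ} (hth : t < h) : smoothPrefix n Y t h = Y h :=
  if_neg fun hh => (hth.trans_le hh.2).false

theorem smoothPrefix_congr {n' : ℕ → ℝ} (hn : ∀ h, 1 ≤ h → h ≤ t → n h = n' h) (h : ℕ) :
    smoothPrefix n Y t h = smoothPrefix n' Y t h := by
  unfold smoothPrefix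
  split_ifs with hh
  exacts [muhat_congr hn (fun _ _ _ => rfl) hh.1 hh.2, rfl]

theorem pooledMean_smoothPrefix_of_lt {j : ℕ} (htj : t < j) :
    pooledMean n (smoothPrefix n Y t) j T = pooledMean n Y j T :=
  pooledMean_congr (fun _ _ _ => rfl) fun _ hh _ => smoothPrefix_of_lt (htj.trans_le hh)

theorem sum_smoothPrefix (hn : ∀ h, 0 < n h) (htT : t ≤ T) :
    ∑ h ∈ Icc 1 T, n h * smoothPrefix n Y t h = ∑ h ∈ Icc 1 T, n h * Y h := by
  rw [sum_Icc_split _ (k := t) (by omega) htT, sum_Icc_split (fun h => n h * Y h) (k := t)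
    (by omega) htT, ← sum_muhat (Y := Y) hn t]
  congr 1 <;> refine sum_congr rfl fun h hh => ?_
  · rw [smoothPrefix_of_le (mem_Icc.1 hh).1 (mem_Icc.1 hh).2]
  · rw [smoothPrefix_of_lt (by have := (mem_Icc.1 hh).1; omega)]

theorem pooledMean_smoothPrefix_congr (hn : ∀ h, 0 < n h) {s j : ℕ} (hsT : s ≤ T) (htT : t ≤ T)
    (hj : 1 ≤ j) (hjT : j ≤ T)
    (hagree : ∀ h, 1 ≤ h → h < j → smoothPrefix n Y s h = smoothPrefix n Y t h) :
    pooledMean n (smoothPrefix n Y s) j T = pooledMean n (smoothPrefix n Y t) j T := by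
  have htotal := (sum_smoothPrefix (Y := Y) hn hsT).trans (sum_smoothPrefix hn htT).symm
  have hprefix : ∑ h ∈ Icc 1 (j - 1), n h * smoothPrefix n Y s h =
      ∑ h ∈ Icc 1 (j - 1), n h * smoothPrefix n Y t h :=
    sum_congr rfl fun h hh => by
      rw [hagree h (mem_Icc.1 hh).1 (by have := (mem_Icc.1 hh).2; omega)]
  rw [sum_Icc_split (fun h => n h * smoothPrefix n Y s h) (k := j - 1) (by omega) (by omega),
    sum_Icc_split (fun h => n h * smoothPrefix n Y t h) (k := j - 1) (by omega) (by omega),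
    Nat.sub_add_cancel hj, hprefix] at htotal
  rw [pooledMean, pooledMean, add_left_cancel htotal]

theorem pooledMean_smoothPrefix_le (hn : ∀ h, 0 < n h) {c : ℝ}
    (hc : ∀ j, 1 ≤ j → j ≤ T → pooledMean n Y j T ≤ c) :
    ∀ t, t ≤ T → ∀ j, 1 ≤ j → j ≤ T → pooledMean n (smoothPrefix n Y t) j T ≤ c := by
  intro t
  induction t using Nat.strong_induction_on with
  | _ t ih =>
    intro htT j hj hjT
    rcases lt_or_ge t j with htj | hjt
    · rw [pooledMean_smoothPrefix_of_lt htj]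
      exact hc j hj hjT
    set b := firstIdx n Y t
    have hb1 : 1 ≤ b := one_le_firstIdx n Y (by omega)
    have hbt : b ≤ t := firstIdx_le_self n Y
    have hagree : ∀ h, 1 ≤ h → h < b → smoothPrefix n Y t h = smoothPrefix n Y (b - 1) h :=
      fun h h1 hhb => by
        rw [smoothPrefix_of_le h1 (by omega), smoothPrefix_of_le h1 (by omega),
          muhat_of_lt_firstIdx h1 hhb]
    rcases lt_or_ge j b with hjb | hbj
    · rw [pooledMean_smoothPrefix_congr hn htT (by omega) hj hjT
        fun h h1 h2 => hagree h h1 (h2.trans hjb)]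
      exact ih (b - 1) (by omega) (by omega) j hj hjT
    · refine pooledMean_le_of_const_block hn (v := pooledMean n Y b t) (fun h h1 h2 => ?_)
        hbj hjt htT ?_ fun htT' => ?_
      · rw [smoothPrefix_of_le (by omega) h2, muhat_of_firstIdx_le (by omega) h1]
      · rw [pooledMean_smoothPrefix_congr hn htT (by omega) hb1 (by omega) hagree,
          pooledMean_smoothPrefix_of_lt (by omega)]
        exact hc b hb1 (by omega)
      · rw [pooledMean_smoothPrefix_of_lt (by omega)]
        exact hc _ (by omega) htT'

end SmoothPrefix

section Recursion

variable {n Y : ℕ → ℝ} {t T : ℕ}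

theorem smoothPrefix_eq_smoothPrefix_min (hn : ∀ h, 0 < n h) (htT : t ≤ T) {h : ℕ} (h1 : 1 ≤ h)
    (hF : h < firstIdx n Y T) :
    smoothPrefix n Y t h = smoothPrefix n Y (min t (firstIdx n Y T - 1)) h := by
  rcases le_or_gt t (firstIdx n Y T - 1) with hle | hlt
  · rw [min_eq_left hle]
  · rw [min_eq_right hlt.le, smoothPrefix_of_le h1 (by omega), smoothPrefix_of_le h1 (by omega)]
    exact muhat_eq_muhat_pred_firstIdx hn t (by omega) htT h h1 hF

theorem pooledMean_smoothPrefix_firstIdx (hn : ∀ h, 0 < n h) (hT : 1 ≤ T) (htT : t ≤ T) :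
    pooledMean n (smoothPrefix n Y t) (firstIdx n Y T) T = pooledMean n Y (firstIdx n Y T) T := by
  have ha1 : 1 ≤ firstIdx n Y T := one_le_firstIdx n Y hT
  rw [pooledMean_smoothPrefix_congr hn htT (s := t) (t := min t (firstIdx n Y T - 1)) (by omega)
      ha1 (firstIdx_le_self n Y) fun h h1 hh => smoothPrefix_eq_smoothPrefix_min hn htT h1 hh,
    pooledMean_smoothPrefix_of_lt (by omega)]

theorem firstIdx_smoothPrefix (hn : ∀ h, 0 < n h) (hT : 1 ≤ T) (htT : t ≤ T) :
    firstIdx n (smoothPrefix n Y t) T = firstIdx n Y T := by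
  set a := firstIdx n Y T
  have ha1 : 1 ≤ a := one_le_firstIdx n Y hT
  have haT : a ≤ T := firstIdx_le_self n Y
  refine firstIdx_eq_of_forall _ _ ha1 haT (fun j hj hjT => ?_) fun j hj hja => ?_
  all_goals rw [pooledMean_smoothPrefix_firstIdx hn hT htT]
  · exact pooledMean_smoothPrefix_le hn
      (fun j' h1 h2 => pooledMean_le_pooledMean_firstIdx n Y h1 h2) t htT j hj hjT
  set s := min t (a - 1)
  rw [pooledMean_smoothPrefix_congr hn htT (t := s) (by omega) hj (by omega)
    fun h h1 hh => smoothPrefix_eq_smoothPrefix_min hn htT h1 (hh.trans hja)]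
  have hb1 : 1 ≤ firstIdx n Y (a - 1) := one_le_firstIdx n Y (by omega)
  have hba : firstIdx n Y (a - 1) ≤ a - 1 := firstIdx_le_self n Y
  have hprefix : pooledMean n (smoothPrefix n Y s) j (a - 1) < pooledMean n Y a T :=
    (pooledMean_smoothPrefix_le hn (fun j' h1 h2 => pooledMean_le_pooledMean_firstIdx n Y h1 h2)
      s (min_le_right _ _) j hj (by omega)).trans_lt
      (pooledMean_pred_lt_pooledMean_firstIdx hn Y hb1 (by omega))
  refine pooledMean_lt_of_lt_of_le hn (k := a - 1) (by omega) (by omega) hprefix ?_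
  rw [Nat.sub_add_cancel ha1, pooledMean_smoothPrefix_of_lt (by omega)]

theorem muhat_smoothPrefix (hn : ∀ h, 0 < n h) :
    ∀ T t, t ≤ T → ∀ i, 1 ≤ i → i ≤ T → muhat n (smoothPrefix n Y t) T i = muhat n Y T i := by
  intro T
  induction T using Nat.strong_induction_on with
  | _ T ih =>
    intro t htT i hi hiT
    have hT : 1 ≤ T := hi.trans hiT
    have hfirst := firstIdx_smoothPrefix (Y := Y) hn hT htT
    set a := firstIdx n Y T
    have haT : a ≤ T := firstIdx_le_self n Y
    rcases le_or_gt a i with hai | hia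
    · rw [muhat_of_firstIdx_le hT (hfirst ▸ hai), muhat_of_firstIdx_le hT hai, hfirst,
        pooledMean_smoothPrefix_firstIdx hn hT htT]
    · rw [muhat_of_lt_firstIdx hi (hfirst ▸ hia), muhat_of_lt_firstIdx hi hia, hfirst,
        muhat_congr (n' := n) (Y' := smoothPrefix n Y (min t (a - 1))) (fun _ _ _ => rfl)
          (fun h h1 h2 => smoothPrefix_eq_smoothPrefix_min hn htT h1 (by omega)) hi (by omega)]
      exact ih (a - 1) (by omega) _ (min_le_right _ _) i hi (by omega)

end Recursion

theorem sdmmsa_recursive_structure_general (m : ℕ) (n Y : ℕ → ℝ)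
    (hn : ∀ h, 1 ≤ h → h ≤ m + 1 → 0 < n h) :
    ∀ i, 1 ≤ i → i ≤ m + 1 →
      muhat n Y (m + 1) i =
        muhat n (fun t => if 1 ≤ t ∧ t ≤ m then muhat n Y m t else Y t) (m + 1) i := by
  intro i hi hiT
  change muhat n Y (m + 1) i = muhat n (smoothPrefix n Y m) (m + 1) i
  -- only the weights on `[1, m + 1]` matter, so extend them positively
  set n' : ℕ → ℝ := fun h => if 1 ≤ h ∧ h ≤ m + 1 then n h else 1
  have hn' : ∀ h, 0 < n' h := fun h => by
    simp only [n']
    split_ifs with hh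
    exacts [hn h hh.1 hh.2, one_pos]
  have hnn' : ∀ h, 1 ≤ h → h ≤ m + 1 → n h = n' h := fun h h1 h2 => (if_pos ⟨h1, h2⟩).symm
  rw [muhat_congr hnn' (fun _ _ _ => rfl) hi hiT, muhat_congr hnn'
    (fun h _ _ => smoothPrefix_congr (fun h h1 h2 => hnn' h h1 (by omega)) h) hi hiT]
  exact (muhat_smoothPrefix hn' _ m (by omega) i hi hiT).symm

/-- eq. (2.23): recursive structure of the SDMMSA: the SDMMSA estimate from
`m+1` data points is unchanged when the first `m` data values are replaced by their
`m`-point SDMMSA estimates. -/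
theorem sdmmsa_recursive_structure (m : ℕ) (hm : 1 ≤ m) (n Y : ℕ → ℝ)
    (hn : ∀ h, 1 ≤ h → h ≤ m + 1 → 0 < n h) :
    ∀ i, 1 ≤ i → i ≤ m + 1 →
      muhat n Y (m + 1) i =
        muhat n (fun t => if 1 ≤ t ∧ t ≤ m then muhat n Y m t else Y t) (m + 1) i :=
  sdmmsa_recursive_structure_general m n Y hn
end
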